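/- arXiv:2011.12732 — 2 statements merged into one kernel-verified Lean document; each statement's English description precedes it below -/
import Mathlib

section
/- Let m, a, α > 0 be real constants with m ≠ a. Set r = |m−a|/(m+a), and for each integer n let n_a = n if m > a and n_a = n + 1/2 if 0 < m < a, and put μₙ = (1/2)·ln r + n_a π i. Then there exist a natural number N and a constant C > 0 such that for every integer n with |n| ≥ N there exists λₙ ∈ ℂ satisfying e^{2λₙ}(1 + α + (a+m)λₙ) + (1 − α) + (a − m)λₙ = 0 and |λₙ − μₙ| ≤ C/|n|. -/
/-!
Since `e^{2μₙ} = (m - a)/(m + a)`, the characteristic equation can be written as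
`e^{2λ} = e^{2μₙ} (1 + κ / (1 + α + (a + m)λ))` for an explicit constant `κ`. On the disc of
radius `C/|n|` about `μₙ` we have `|λ| ≥ |n|`, so the perturbation `κ / (1 + α + (a + m)λ)` is
`O(1/|n|)` with Lipschitz constant `O(1/n²)`. Hence `λ ↦ μₙ + ½ log (1 + κ / (1 + α + (a + m)λ))`
maps the disc into itself and is a contraction; its fixed point is the root `λₙ`.
-/

/-- `n_a = n` if `m > a` and `n + 1/2` if `0 < m < a`. -/
noncomputable def na (m a : ℝ) (n : ℤ) : ℝ := if a < m then (n : ℝ) else (n : ℝ) + 1 / 2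

/-- `μₙ = (1/2)·ln(|m-a|/(m+a)) + n_a π i`. -/
noncomputable def muSeq (m a : ℝ) (n : ℤ) : ℂ :=
  (Real.log (|m - a| / (m + a)) / 2 : ℝ) + (na m a n * Real.pi : ℝ) * Complex.I

open Complex Metric Set
open scoped NNReal

theorem Complex.lipschitzOnWith_log_closedBall_one :
    LipschitzOnWith 2 log (closedBall 1 (1 / 2)) := by
  have hre : ∀ z ∈ closedBall (1 : ℂ) (1 / 2), 1 / 2 ≤ z.re := fun z hz => by
    have := (abs_le.1 ((abs_re_le_norm (z - 1)).trans (mem_closedBall_iff_norm.1 hz))).1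
    simp only [sub_re, one_re] at this
    linarith
  refine (convex_closedBall _ _).lipschitzOnWith_of_nnnorm_hasDerivWithin_le
    (fun z hz => (hasDerivAt_log (Or.inl (by linarith [hre z hz]))).hasDerivWithinAt) fun z hz => ?_
  rw [← NNReal.coe_le_coe, coe_nnnorm, norm_inv, NNReal.coe_ofNat]
  rw [inv_le_comm₀ (by linarith [hre z hz, re_le_norm z]) (by norm_num)]
  linarith [hre z hz, re_le_norm z]

theorem exists_mem_closedBall_exp_two_mul_eq {w : ℂ → ℂ} {μ : ℂ} {ρ : ℝ} {K : ℝ≥0}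
    (hρ₀ : 0 ≤ ρ) (hρ : ρ ≤ 1 / 2) (hw : ∀ z ∈ closedBall μ ρ, ‖w z‖ ≤ ρ)
    (hK : K < 1) (hlip : LipschitzOnWith K w (closedBall μ ρ)) :
    ∃ l ∈ closedBall μ ρ, exp (2 * l) = exp (2 * μ) * (1 + w l) := by
  have hlog := lipschitzOnWith_log_closedBall_one
  have hmem : ∀ z ∈ closedBall μ ρ, 1 + w z ∈ closedBall (1 : ℂ) (1 / 2) := fun z hz => by
    rw [mem_closedBall_iff_norm, add_sub_cancel_left]
    exact (hw z hz).trans hρ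
  have hdist : ∀ z ∈ closedBall μ ρ, ∀ z' ∈ closedBall μ ρ,
      dist (log (1 + w z)) (log (1 + w z')) ≤ 2 * dist (w z) (w z') := fun z hz z' hz' => by
    simpa [dist_add_left] using hlog.dist_le_mul _ (hmem z hz) _ (hmem z' hz')
  set φ : ℂ → ℂ := fun z => μ + log (1 + w z) / 2
  have hmaps : MapsTo φ (closedBall μ ρ) (closedBall μ ρ) := fun z hz => by
    have hone : (1 : ℂ) ∈ closedBall (1 : ℂ) (1 / 2) := mem_closedBall_self (by norm_num)
    have := hlog.dist_le_mul _ (hmem z hz) _ hone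
    rw [log_one, dist_zero_right, dist_eq_norm, add_sub_cancel_left, NNReal.coe_ofNat] at this
    rw [mem_closedBall_iff_norm, add_sub_cancel_left, norm_div, Complex.norm_two]
    linarith [hw z hz]
  have hφ : LipschitzOnWith K φ (closedBall μ ρ) :=
    LipschitzOnWith.of_dist_le_mul fun z hz z' hz' => by
      have := hdist z hz z' hz'
      have := hlip.dist_le_mul z hz z' hz'
      rw [dist_add_left, dist_eq_norm, ← sub_div, norm_div, Complex.norm_two, ← dist_eq_norm]
      linarith
  obtain ⟨l, hl, hfix, -⟩ := ContractingWith.exists_fixedPoint' isClosed_closedBall.isComplete hmaps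
    ⟨hK, hφ.mapsToRestrict hmaps⟩ (mem_closedBall_self hρ₀) (edist_ne_top _ _)
  refine ⟨l, hl, ?_⟩
  have hne : 1 + w l ≠ 0 := fun h => by
    have := hw l hl
    rw [eq_neg_of_add_eq_zero_right h, norm_neg, norm_one] at this
    linarith
  have h2l : 2 * l = 2 * μ + log (1 + w l) := by
    conv_lhs => rw [← hfix.eq]
    ring
  rw [h2l, exp_add, exp_log hne]

section AffineDenominator

variable {b c κ z : ℂ} {R : ℝ}

theorem half_norm_mul_le_norm_add_mul (hR : 2 * ‖b‖ ≤ ‖c‖ * R) (hz : R ≤ ‖z‖) :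
    ‖c‖ * R / 2 ≤ ‖b + c * z‖ := by
  have h := norm_sub_norm_le (c * z) (-b)
  rw [sub_neg_eq_add, add_comm, norm_neg, norm_mul] at h
  nlinarith [norm_nonneg c]

theorem norm_div_add_mul_le (hc : c ≠ 0) (hR₀ : 0 < R) (hR : 2 * ‖b‖ ≤ ‖c‖ * R) (hz : R ≤ ‖z‖) :
    ‖κ / (b + c * z)‖ ≤ 2 * ‖κ‖ / (‖c‖ * R) := by
  calc ‖κ / (b + c * z)‖ = ‖κ‖ / ‖b + c * z‖ := norm_div _ _
    _ ≤ ‖κ‖ / (‖c‖ * R / 2) := by gcongr; exact half_norm_mul_le_norm_add_mul hR hz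
    _ = 2 * ‖κ‖ / (‖c‖ * R) := by field_simp

theorem dist_div_add_mul_le {z' : ℂ} (hc : c ≠ 0) (hR₀ : 0 < R) (hR : 2 * ‖b‖ ≤ ‖c‖ * R)
    (hz : R ≤ ‖z‖) (hz' : R ≤ ‖z'‖) :
    dist (κ / (b + c * z)) (κ / (b + c * z')) ≤ 4 * ‖κ‖ / (‖c‖ * R ^ 2) * dist z z' := by
  have hpos : 0 < ‖c‖ * R / 2 := by positivity
  have hD := hpos.trans_le (half_norm_mul_le_norm_add_mul hR hz)
  have hD' := hpos.trans_le (half_norm_mul_le_norm_add_mul hR hz')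
  have hdiff : κ / (b + c * z) - κ / (b + c * z') =
      κ * c * (z' - z) / ((b + c * z) * (b + c * z')) := by
    rw [div_sub_div _ _ (norm_pos_iff.1 hD) (norm_pos_iff.1 hD')]
    ring
  rw [dist_eq_norm, hdiff, norm_div, norm_mul, norm_mul, norm_mul, ← dist_eq_norm, dist_comm]
  calc ‖κ‖ * ‖c‖ * dist z z' / (‖b + c * z‖ * ‖b + c * z'‖)
      ≤ ‖κ‖ * ‖c‖ * dist z z' / ((‖c‖ * R / 2) * (‖c‖ * R / 2)) := by
        gcongr <;> exact half_norm_mul_le_norm_add_mul hR ‹_›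
    _ = 4 * ‖κ‖ / (‖c‖ * R ^ 2) * dist z z' := by field_simp; ring

end AffineDenominator

theorem exists_mem_closedBall_exp_two_mul_eq_mul_one_add_div {b c κ μ : ℂ} {R ρ : ℝ} (hc : c ≠ 0)
    (hR₀ : 0 < R) (hR : 2 * ‖b‖ ≤ ‖c‖ * R) (hball : ∀ z ∈ closedBall μ ρ, R ≤ ‖z‖)
    (hρ₀ : 0 ≤ ρ) (hρ : ρ ≤ 1 / 2) (hκρ : 2 * ‖κ‖ ≤ ‖c‖ * R * ρ) (hκ : 4 * ‖κ‖ < ‖c‖ * R ^ 2) :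
    ∃ l ∈ closedBall μ ρ, b + c * l ≠ 0 ∧ exp (2 * l) = exp (2 * μ) * (1 + κ / (b + c * l)) := by
  have hcR : 0 < ‖c‖ * R := mul_pos (norm_pos_iff.2 hc) hR₀
  have hL : 4 * ‖κ‖ / (‖c‖ * R ^ 2) < 1 := (div_lt_one (by positivity)).2 hκ
  have hw : ∀ z ∈ closedBall μ ρ, ‖κ / (b + c * z)‖ ≤ ρ := fun z hz =>
    (norm_div_add_mul_le hc hR₀ hR (hball z hz)).trans ((div_le_iff₀' hcR).2 hκρ)
  have hlip : LipschitzOnWith (4 * ‖κ‖ / (‖c‖ * R ^ 2)).toNNReal (fun z => κ / (b + c * z))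
      (closedBall μ ρ) := LipschitzOnWith.of_dist_le_mul fun z hz z' hz' => by
    rw [Real.coe_toNNReal _ (by positivity)]
    exact dist_div_add_mul_le hc hR₀ hR (hball z hz) (hball z' hz')
  obtain ⟨l, hl, hexp⟩ :=
    exists_mem_closedBall_exp_two_mul_eq hρ₀ hρ hw (Real.toNNReal_lt_one.2 hL) hlip
  have hD : 0 < ‖b + c * l‖ :=
    (half_pos hcR).trans_le (half_norm_mul_le_norm_add_mul hR (hball l hl))
  exact ⟨l, hl, norm_pos_iff.1 hD, hexp⟩

theorem abs_sub_na_le (m a : ℝ) (n : ℤ) : |na m a n - n| ≤ 1 / 2 := by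
  unfold na; split_ifs <;> norm_num [abs_of_pos]

theorem muSeq_im (m a : ℝ) (n : ℤ) : (muSeq m a n).im = na m a n * Real.pi := by
  simp [muSeq]

theorem abs_le_norm_of_mem_closedBall_muSeq {m a ρ : ℝ} {n : ℤ} {z : ℂ} (hn : 2 ≤ |(n : ℝ)|)
    (hρ : ρ ≤ 1 / 2) (hz : z ∈ closedBall (muSeq m a n) ρ) : |(n : ℝ)| ≤ ‖z‖ := by
  have hna : |(n : ℝ)| - 1 / 2 ≤ |na m a n| := by
    have := abs_sub_abs_le_abs_sub (n : ℝ) (na m a n)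
    rw [abs_sub_comm] at this
    linarith [abs_sub_na_le m a n]
  have him : |z.im - (muSeq m a n).im| ≤ ρ := by
    rw [← sub_im]; exact (abs_im_le_norm _).trans (mem_closedBall_iff_norm.1 hz)
  rw [muSeq_im] at him
  have := abs_sub_abs_le_abs_sub (na m a n * Real.pi) z.im
  rw [abs_sub_comm, abs_mul, abs_of_pos Real.pi_pos] at this
  have hπ := Real.pi_gt_three
  nlinarith [abs_im_le_norm z]

theorem exp_two_mul_muSeq {m a : ℝ} (hm : 0 < m) (ha : 0 < a) (hma : m ≠ a) (n : ℤ) :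
    exp (2 * muSeq m a n) = ((m - a) / (m + a) : ℝ) := by
  have hr : 0 < |m - a| / (m + a) := div_pos (abs_pos.2 (sub_ne_zero.2 hma)) (by linarith)
  have h2μ : 2 * muSeq m a n = (Real.log (|m - a| / (m + a)) : ℂ) + n * (2 * Real.pi * I)
      + (2 * (na m a n - n) : ℝ) * (Real.pi * I) := by
    unfold muSeq; push_cast; ring
  rw [h2μ, exp_add, exp_add, ← ofReal_exp, Real.exp_log hr, exp_int_mul_two_pi_mul_I, mul_one]
  unfold na
  split_ifs with h
  · rw [abs_of_pos (by linarith)]; simp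
  · rw [abs_of_neg (sub_neg.2 (lt_of_le_of_ne (not_lt.1 h) hma))]
    simp only [add_sub_cancel_left]
    norm_num [exp_pi_mul_I]
    ring

/-- Dividing the characteristic equation by `(m + a)(1 + α + (a + m)λ)` puts it in the form
`e^{2λ} = (m - a)/(m + a) · (1 + charCoeff m a α / (1 + α + (a + m)λ))`. -/
noncomputable def charCoeff (m a α : ℝ) : ℝ := -(1 - α) * (m + a) / (m - a) - (1 + α)

theorem charEq_of_exp_two_mul_eq {m a α : ℝ} {l : ℂ} (hma : m ≠ a) (hma' : m + a ≠ 0)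
    (hD : 1 + α + (a + m) * l ≠ 0)
    (h : exp (2 * l) = ((m - a) / (m + a) : ℝ) * (1 + charCoeff m a α / (1 + α + (a + m) * l))) :
    exp (2 * l) * (1 + α + (a + m) * l) + (1 - α) + (a - m) * l = 0 := by
  have hsub : (m : ℂ) - a ≠ 0 := sub_ne_zero.2 (ofReal_injective.ne hma)
  have hadd : (m : ℂ) + a ≠ 0 := by exact_mod_cast hma'
  rw [h, charCoeff]
  push_cast
  field_simp
  ring

theorem le_abs_of_natCeil_le_abs {x : ℝ} {n : ℤ} (hn : (⌈x⌉₊ : ℤ) ≤ |n|) : x ≤ |(n : ℝ)| := by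
  rw [← Int.cast_abs]
  exact (Nat.le_ceil x).trans (by exact_mod_cast hn)

theorem stmt6_general (m a α : ℝ) (hm : 0 < m) (ha : 0 < a) (hma : m ≠ a) :
    ∃ (N : ℕ) (C : ℝ), 0 < C ∧
      ∀ n : ℤ, (N : ℤ) ≤ |n| →
        ∃ l : ℂ,
          Complex.exp (2 * l) * (1 + α + (a + m) * l) + (1 - α) + (a - m) * l = 0 ∧
          ‖l - muSeq m a n‖ ≤ C / |(n : ℝ)| := by
  have hc : 0 < a + m := by linarith
  have hcn : ‖(a : ℂ) + m‖ = a + m := by rw [← ofReal_add, norm_real, Real.norm_of_nonneg hc.le]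
  have hbn : ‖(1 : ℂ) + α‖ = |1 + α| := by
    rw [← ofReal_one, ← ofReal_add, norm_real, Real.norm_eq_abs]
  set κ := charCoeff m a α
  set C := 2 * (|κ| + 1) / (a + m)
  have hCc : C * (a + m) = 2 * (|κ| + 1) := div_mul_cancel₀ _ hc.ne'
  have hC : 0 < C := by positivity
  refine ⟨⌈max (max 2 (2 * C)) (2 * |1 + α| / (a + m))⌉₊, C, hC, fun n hn => ?_⟩
  have hy := le_abs_of_natCeil_le_abs hn
  simp only [max_le_iff, div_le_iff₀ hc] at hy
  obtain ⟨⟨hy₂, hyC⟩, hyb⟩ := hy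
  set y := |(n : ℝ)|
  have hy₀ : 0 < y := by linarith
  have hρ : C / y ≤ 1 / 2 := by rw [div_le_iff₀ hy₀]; linarith
  obtain ⟨l, hl, hD, hexp⟩ := exists_mem_closedBall_exp_two_mul_eq_mul_one_add_div (b := 1 + α)
    (κ := κ) (norm_pos_iff.1 (hcn ▸ hc)) hy₀ (by rw [hcn, hbn]; linarith)
    (fun z hz => abs_le_norm_of_mem_closedBall_muSeq hy₂ hρ hz) (by positivity) hρ
    (by rw [hcn, norm_real, Real.norm_eq_abs, mul_assoc, mul_div_cancel₀ _ hy₀.ne']; linarith)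
    (by
      rw [hcn, norm_real, Real.norm_eq_abs]
      nlinarith [mul_le_mul_of_nonneg_left hyC hc.le,
        mul_le_mul_of_nonneg_left hy₂ (mul_pos hc hy₀).le])
  rw [exp_two_mul_muSeq hm ha hma] at hexp
  exact ⟨l, charEq_of_exp_two_mul_eq hma (by linarith) hD hexp, mem_closedBall_iff_norm.1 hl⟩

/-- for all large `|n|` the characteristic equation
`e^{2λ}(1+α+(a+m)λ) + (1-α) + (a-m)λ = 0` has a root `λₙ` with `|λₙ - μₙ| ≤ C/|n|`. -/
theorem stmt6 (m a α : ℝ) (hm : 0 < m) (ha : 0 < a) (hα : 0 < α) (hma : m ≠ a) :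
    ∃ (N : ℕ) (C : ℝ), 0 < C ∧
      ∀ n : ℤ, (N : ℤ) ≤ |n| →
        ∃ l : ℂ,
          Complex.exp (2 * l) * (1 + α + (a + m) * l) + (1 - α) + (a - m) * l = 0 ∧
          ‖l - muSeq m a n‖ ≤ C / |(n : ℝ)| :=
  stmt6_general m a α hm ha hma
end

section
/- Let m, a, α > 0 be real constants with m ≠ a. Set r = |m−a|/(m+a), n_a = n if m > a and n_a = n + 1/2 if 0 < m < a, and μₙ = (1/2)·ln r + n_a π i. Suppose (λₙ)_{n ∈ ℤ} is a sequence of nonzero complex numbers and C₀ > 0 is such that |λₙ − μₙ| ≤ C₀/|n| for all n ≠ 0. Define fₙ(x) = e^{λₙ x} − e^{−λₙ x}. Then there exist C > 0 and N ∈ ℕ such that for all integers n with |n| ≥ N and all x ∈ [0,1]: |fₙ'(x)/λₙ − (r^{x/2} e^{i n_a π x} + r^{−x/2} e^{−i n_a π x})| ≤ C/|n|, |fₙ(x) − (r^{x/2} e^{i n_a π x} − r^{−x/2} e^{−i n_a π x})| ≤ C/|n|, and |(fₙ'(1) + α λₙ fₙ(1))/λₙ²| ≤ C/|n|. -/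
/-- The eigenfunction `f_λ(x) = e^{λx} - e^{-λx}`. -/
noncomputable def efun (l : ℂ) : ℝ → ℂ :=
  fun x => Complex.exp (l * x) - Complex.exp (-(l * x))

/-!
The model functions are exactly `e^{μₙ x} ± e^{-μₙ x}`, and `fₙ'(x)/λₙ = e^{λₙ x} + e^{-λₙ x}`.
Since `Re μₙ` does not depend on `n`, the estimate `|e^z - e^w| ≤ 2 e^{Re w} |z - w|` for
`|z - w| ≤ 1` bounds the first two differences by a constant times `|λₙ - μₙ| ≤ C₀/|n|`.
For the boundary term, `(fₙ'(1) + αλₙ fₙ(1))/λₙ² = (e^{λₙ} + e^{-λₙ} + α fₙ(1))/λₙ` has a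
bounded numerator, while `|λₙ| ≥ |Im λₙ| ≥ |n|` for large `|n|`.
-/
open Complex

theorem norm_exp_sub_exp_le {z w : ℂ} (h : ‖z - w‖ ≤ 1) :
    ‖exp z - exp w‖ ≤ 2 * Real.exp w.re * ‖z - w‖ := by
  have hfactor : exp z - exp w = exp w * (exp (z - w) - 1) := by
    rw [mul_sub, mul_one, ← exp_add, add_sub_cancel]
  rw [hfactor, norm_mul, norm_exp, mul_comm 2, mul_assoc]
  gcongr
  exact norm_exp_sub_one_le h

theorem norm_exp_mul_sub_exp_mul_le {l μ : ℂ} {x δ : ℝ} (hx : |x| ≤ 1)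
    (hδ : ‖l - μ‖ ≤ δ) (hδ₁ : δ ≤ 1) :
    ‖exp (l * x) - exp (μ * x)‖ ≤ 2 * Real.exp |μ.re| * δ := by
  have hdiff : ‖l * x - μ * x‖ ≤ δ := by
    rw [← sub_mul, norm_mul, norm_real, Real.norm_eq_abs]
    nlinarith [norm_nonneg (l - μ), abs_nonneg x]
  have hre : (μ * x).re ≤ |μ.re| := by
    rw [re_mul_ofReal]
    calc μ.re * x ≤ |μ.re| * |x| := (le_abs_self _).trans (abs_mul _ _).le
      _ ≤ |μ.re| := mul_le_of_le_one_right (abs_nonneg _) hx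
  calc ‖exp (l * x) - exp (μ * x)‖ ≤ 2 * Real.exp (μ * x).re * ‖l * x - μ * x‖ :=
        norm_exp_sub_exp_le (hdiff.trans hδ₁)
    _ ≤ 2 * Real.exp |μ.re| * δ := by gcongr

theorem norm_exp_neg_mul_sub_exp_neg_mul_le {l μ : ℂ} {x δ : ℝ} (hx : |x| ≤ 1)
    (hδ : ‖l - μ‖ ≤ δ) (hδ₁ : δ ≤ 1) :
    ‖exp (-(l * x)) - exp (-(μ * x))‖ ≤ 2 * Real.exp |μ.re| * δ := by
  simpa using norm_exp_mul_sub_exp_mul_le (x := -x) (by rwa [abs_neg]) hδ hδ₁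

theorem exp_abs_re_le_of_norm_sub_le_one {l μ : ℂ} (h : ‖l - μ‖ ≤ 1) :
    Real.exp |l.re| ≤ Real.exp (|μ.re| + 1) := by
  refine Real.exp_le_exp.mpr ?_
  have := abs_re_le_norm (l - μ)
  rw [sub_re] at this
  linarith [abs_sub_abs_le_abs_sub l.re μ.re]

theorem hasDerivAt_efun (l : ℂ) (x : ℝ) :
    HasDerivAt (efun l) (l * (exp (l * x) + exp (-(l * x)))) x := by
  have hpos : HasDerivAt (fun z : ℂ => exp (l * z)) (exp (l * x) * l) (x : ℂ) := by
    simpa using ((hasDerivAt_id (x : ℂ)).const_mul l).cexp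
  have hneg : HasDerivAt (fun z : ℂ => exp (-(l * z))) (exp (-(l * x)) * -l) (x : ℂ) := by
    simpa using ((hasDerivAt_id (x : ℂ)).const_mul l).neg.cexp
  convert (hpos.sub hneg).comp_ofReal using 1
  · rfl
  · ring

theorem deriv_efun (l : ℂ) (x : ℝ) :
    deriv (efun l) x = l * (exp (l * x) + exp (-(l * x))) :=
  (hasDerivAt_efun l x).deriv

theorem norm_efun_sub_le {l μ : ℂ} {x δ : ℝ} (hx : |x| ≤ 1) (hδ : ‖l - μ‖ ≤ δ)
    (hδ₁ : δ ≤ 1) :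
    ‖efun l x - (exp (μ * x) - exp (-(μ * x)))‖ ≤ 4 * Real.exp |μ.re| * δ := by
  have hsplit : efun l x - (exp (μ * x) - exp (-(μ * x)))
      = (exp (l * x) - exp (μ * x)) - (exp (-(l * x)) - exp (-(μ * x))) := by
    simp only [efun]; ring
  rw [hsplit]
  linarith [norm_sub_le (exp (l * x) - exp (μ * x)) (exp (-(l * x)) - exp (-(μ * x))),
    norm_exp_mul_sub_exp_mul_le hx hδ hδ₁, norm_exp_neg_mul_sub_exp_neg_mul_le hx hδ hδ₁]

theorem norm_deriv_efun_div_sub_le {l μ : ℂ} {x δ : ℝ} (hl : l ≠ 0) (hx : |x| ≤ 1)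
    (hδ : ‖l - μ‖ ≤ δ) (hδ₁ : δ ≤ 1) :
    ‖deriv (efun l) x / l - (exp (μ * x) + exp (-(μ * x)))‖
      ≤ 4 * Real.exp |μ.re| * δ := by
  have hsplit : deriv (efun l) x / l - (exp (μ * x) + exp (-(μ * x)))
      = (exp (l * x) - exp (μ * x)) + (exp (-(l * x)) - exp (-(μ * x))) := by
    rw [deriv_efun, mul_div_cancel_left₀ _ hl]; ring
  rw [hsplit]
  linarith [norm_add_le (exp (l * x) - exp (μ * x)) (exp (-(l * x)) - exp (-(μ * x))),
    norm_exp_mul_sub_exp_mul_le hx hδ hδ₁, norm_exp_neg_mul_sub_exp_neg_mul_le hx hδ hδ₁]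

theorem norm_deriv_efun_add_mul_efun_div_sq_le {l : ℂ} (hl : l ≠ 0) (α : ℝ) :
    ‖(deriv (efun l) 1 + α * l * efun l 1) / l ^ 2‖
      ≤ 2 * (1 + |α|) * Real.exp |l.re| / ‖l‖ := by
  have hsplit : (deriv (efun l) 1 + α * l * efun l 1) / l ^ 2
      = ((exp l + exp (-l)) + α * (exp l - exp (-l))) / l := by
    rw [deriv_efun]; simp only [efun]; push_cast; field_simp
  have hexp : ‖exp l‖ ≤ Real.exp |l.re| := by
    rw [norm_exp]; exact Real.exp_le_exp.mpr (le_abs_self _)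
  have hexpNeg : ‖exp (-l)‖ ≤ Real.exp |l.re| := by
    rw [norm_exp, neg_re]; exact Real.exp_le_exp.mpr (neg_le_abs _)
  have hnum : ‖(exp l + exp (-l)) + α * (exp l - exp (-l))‖
      ≤ 2 * (1 + |α|) * Real.exp |l.re| :=
    calc _ ≤ ‖exp l + exp (-l)‖ + ‖(α : ℂ)‖ * ‖exp l - exp (-l)‖ :=
          (norm_add_le _ _).trans_eq (by rw [norm_mul])
      _ ≤ (‖exp l‖ + ‖exp (-l)‖) + |α| * (‖exp l‖ + ‖exp (-l)‖) := by
          rw [norm_real, Real.norm_eq_abs]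
          gcongr
          · exact norm_add_le _ _
          · exact norm_sub_le _ _
      _ ≤ 2 * (1 + |α|) * Real.exp |l.re| := by nlinarith [abs_nonneg α]
  rw [hsplit, norm_div]
  gcongr

theorem ofReal_rpow_mul_exp_eq_exp_muSeq {m a : ℝ} (hr : 0 < |m - a| / (m + a))
    (n : ℤ) (x : ℝ) :
    (((|m - a| / (m + a)) ^ (x / 2) : ℝ) : ℂ) * exp (I * (na m a n * Real.pi * x))
      = exp (muSeq m a n * x) := by
  rw [Real.rpow_def_of_pos hr, ofReal_exp, ← exp_add, muSeq]
  push_cast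
  ring_nf

theorem ofReal_rpow_neg_mul_exp_neg_eq_exp_neg_muSeq {m a : ℝ} (hr : 0 < |m - a| / (m + a))
    (n : ℤ) (x : ℝ) :
    (((|m - a| / (m + a)) ^ (-(x / 2)) : ℝ) : ℂ) * exp (-(I * (na m a n * Real.pi * x)))
      = exp (-(muSeq m a n * x)) := by
  rw [Real.rpow_def_of_pos hr, ofReal_exp, ← exp_add, muSeq]
  push_cast
  ring_nf

theorem muSeq_re (m a : ℝ) (n : ℤ) : (muSeq m a n).re = Real.log (|m - a| / (m + a)) / 2 := by
  simp [muSeq]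

theorem sub_half_le_abs_na (m a : ℝ) (n : ℤ) : |(n : ℝ)| - 1 / 2 ≤ |na m a n| := by
  unfold na
  split_ifs
  · linarith
  · have := abs_sub_abs_le_abs_sub (n : ℝ) (n + 1 / 2)
    rw [sub_add_cancel_left, abs_neg, abs_of_pos (one_half_pos : (0 : ℝ) < 1 / 2)] at this
    linarith

theorem le_norm_of_norm_sub_muSeq_le_one {m a : ℝ} {n : ℤ} {l : ℂ}
    (hl : ‖l - muSeq m a n‖ ≤ 1) (hn : 2 ≤ |(n : ℝ)|) : |(n : ℝ)| ≤ ‖l‖ := by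
  have him : |(muSeq m a n).im| = |na m a n| * Real.pi := by
    simp [muSeq, abs_mul, abs_of_pos Real.pi_pos]
  have hclose : |(muSeq m a n).im| - |l.im| ≤ 1 :=
    calc _ ≤ |(muSeq m a n - l).im| := by rw [sub_im]; exact abs_sub_abs_le_abs_sub _ _
      _ ≤ ‖muSeq m a n - l‖ := abs_im_le_norm _
      _ ≤ 1 := by rwa [norm_sub_rev]
  nlinarith [sub_half_le_abs_na m a n, Real.pi_gt_three, abs_im_le_norm l]

theorem stmt7_general (m a α : ℝ) (hm : 0 < m) (ha : 0 < a) (hma : m ≠ a)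
    (l : ℤ → ℂ) (C₀ : ℝ)
    (hasymp : ∀ n : ℤ, n ≠ 0 → ‖l n - muSeq m a n‖ ≤ C₀ / |(n : ℝ)|) :
    ∃ (C : ℝ), 0 < C ∧ ∃ N : ℕ, ∀ n : ℤ, (N : ℤ) ≤ |n| → ∀ x ∈ Set.Icc (0:ℝ) 1,
      ‖(deriv (efun (l n)) x / l n
          - (((|m - a| / (m + a)) ^ (x / 2) : ℝ)
              * Complex.exp (Complex.I * (na m a n * Real.pi * x))
            + ((|m - a| / (m + a)) ^ (-(x / 2)) : ℝ)
              * Complex.exp (-(Complex.I * (na m a n * Real.pi * x)))))‖ ≤ C / |(n : ℝ)| ∧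
      ‖(efun (l n) x
          - (((|m - a| / (m + a)) ^ (x / 2) : ℝ)
              * Complex.exp (Complex.I * (na m a n * Real.pi * x))
            - ((|m - a| / (m + a)) ^ (-(x / 2)) : ℝ)
              * Complex.exp (-(Complex.I * (na m a n * Real.pi * x)))))‖ ≤ C / |(n : ℝ)| ∧
      ‖((deriv (efun (l n)) 1 + α * l n * efun (l n) 1) / (l n) ^ 2)‖
        ≤ C / |(n : ℝ)| := by
  have hr : 0 < |m - a| / (m + a) := div_pos (abs_pos.mpr (sub_ne_zero.mpr hma)) (by linarith)
  have hC₀ : 0 ≤ C₀ := by simpa using (norm_nonneg _).trans (hasymp 1 one_ne_zero)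
  set K := Real.exp (|Real.log (|m - a| / (m + a)) / 2| + 1)
  refine ⟨4 * K * C₀ + 2 * (1 + |α|) * K, by positivity, ⌈C₀⌉₊ + 2, fun n hn x hx => ?_⟩
  have hn : C₀ + 2 ≤ |(n : ℝ)| := by
    have : ((⌈C₀⌉₊ + 2 : ℕ) : ℝ) ≤ ((|n| : ℤ) : ℝ) := by exact_mod_cast hn
    push_cast at this
    linarith [Nat.le_ceil C₀]
  have hδ := hasymp n (by rintro rfl; norm_num at hn; linarith)
  have hδ₁ : C₀ / |(n : ℝ)| ≤ 1 := (div_le_one (by linarith)).mpr (by linarith)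
  have hx : |x| ≤ 1 := abs_le.mpr ⟨by linarith [hx.1], hx.2⟩
  have hln : |(n : ℝ)| ≤ ‖l n‖ :=
    le_norm_of_norm_sub_muSeq_le_one (hδ.trans hδ₁) (by linarith)
  have hl : l n ≠ 0 := norm_pos_iff.mp (by linarith)
  have hμK : Real.exp |(muSeq m a n).re| ≤ K := by
    rw [muSeq_re]; exact Real.exp_le_exp.mpr (by linarith)
  have hlK : Real.exp |(l n).re| ≤ K :=
    (exp_abs_re_le_of_norm_sub_le_one (hδ.trans hδ₁)).trans_eq (by rw [muSeq_re])
  have hK : 0 < K := Real.exp_pos _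
  have hmodel : 4 * Real.exp |(muSeq m a n).re| * (C₀ / |(n : ℝ)|)
      ≤ (4 * K * C₀ + 2 * (1 + |α|) * K) / |(n : ℝ)| := by
    rw [mul_div_assoc']
    gcongr
    nlinarith [abs_nonneg α]
  have hboundary : 2 * (1 + |α|) * Real.exp |(l n).re| / ‖l n‖
      ≤ (4 * K * C₀ + 2 * (1 + |α|) * K) / |(n : ℝ)| := by
    apply div_le_div₀ (by positivity) _ (by linarith) hln
    nlinarith [abs_nonneg α]
  rw [ofReal_rpow_mul_exp_eq_exp_muSeq hr, ofReal_rpow_neg_mul_exp_neg_eq_exp_neg_muSeq hr]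
  exact ⟨(norm_deriv_efun_div_sub_le hl hx hδ hδ₁).trans hmodel,
    (norm_efun_sub_le hx hδ hδ₁).trans hmodel,
    (norm_deriv_efun_add_mul_efun_div_sq_le hl α).trans hboundary⟩

/-- asymptotics of the eigenfunctions `fₙ(x) = e^{λₙx} - e^{-λₙx}`,
their derivatives, and the boundary combination `(fₙ'(1)+αλₙfₙ(1))/λₙ²`,
uniformly for `x ∈ [0,1]`. -/
theorem stmt7 (m a α : ℝ) (hm : 0 < m) (ha : 0 < a) (hα : 0 < α) (hma : m ≠ a)
    (l : ℤ → ℂ) (hl : ∀ n, l n ≠ 0) (C₀ : ℝ) (hC₀ : 0 < C₀)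
    (hasymp : ∀ n : ℤ, n ≠ 0 → ‖l n - muSeq m a n‖ ≤ C₀ / |(n : ℝ)|) :
    ∃ (C : ℝ), 0 < C ∧ ∃ N : ℕ, ∀ n : ℤ, (N : ℤ) ≤ |n| → ∀ x ∈ Set.Icc (0:ℝ) 1,
      ‖(deriv (efun (l n)) x / l n
          - (((|m - a| / (m + a)) ^ (x / 2) : ℝ)
              * Complex.exp (Complex.I * (na m a n * Real.pi * x))
            + ((|m - a| / (m + a)) ^ (-(x / 2)) : ℝ)
              * Complex.exp (-(Complex.I * (na m a n * Real.pi * x)))))‖ ≤ C / |(n : ℝ)| ∧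
      ‖(efun (l n) x
          - (((|m - a| / (m + a)) ^ (x / 2) : ℝ)
              * Complex.exp (Complex.I * (na m a n * Real.pi * x))
            - ((|m - a| / (m + a)) ^ (-(x / 2)) : ℝ)
              * Complex.exp (-(Complex.I * (na m a n * Real.pi * x)))))‖ ≤ C / |(n : ℝ)| ∧
      ‖((deriv (efun (l n)) 1 + α * l n * efun (l n) 1) / (l n) ^ 2)‖
        ≤ C / |(n : ℝ)| :=
  stmt7_general m a α hm ha hma l C₀ hasymp
end
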